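/- In the setup (G centerless, f, h : G → Aut(G) with h(σ) = conj(g(σ))∘f(σ), g a bijection satisfying g(στ) = g(σ)·f(σ)(g(τ)), and N = {ρ(g(σ))∘f(σ) : σ ∈ G} a normal subgroup of Hol(G)), the images f(G) and h(G) are centerless normal subgroups of Aut(G). -/

import Mathlib

/-- The left regular representation `λ : G →* Perm G`, `λ(σ)(x) = σ·x`. -/
def lambda (G : Type*) [Group G] : G →* Equiv.Perm G where
  toFun σ := Equiv.mulLeft σ
  map_one' := by ext x; simp
  map_mul' σ τ := by ext x; simp [mul_assoc]

/-- The right regular representation `ρ : G →* Perm G`, `ρ(σ)(x) = x·σ⁻¹`. -/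
def rho (G : Type*) [Group G] : G →* Equiv.Perm G where
  toFun σ := Equiv.mulRight σ⁻¹
  map_one' := by ext x; simp
  map_mul' σ τ := by ext x; simp [mul_assoc]

/-- The holomorph `Hol(G)`: the normalizer of `λ(G)` in `Perm G`. -/
def Hol (G : Type*) [Group G] : Subgroup (Equiv.Perm G) :=
  Subgroup.normalizer ((lambda G).range : Set (Equiv.Perm G))

/-!
Write `n σ = ρ(g σ) f(σ)`; a permutation `ρ(c) ψ` determines `c` and `ψ`. Normality of `N` under
`Aut(G)` gives some `τ₁` with `g τ₁ = f(σ)(g τ)` and `f τ₁ = f(σ) f(τ) f(σ)⁻¹`. Normality under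
`λ(G)` puts the commutator `[n σ, λ(a)] = λ(f(σ)(a) a⁻¹)` into `N`, hence also
`λ(f(σ)(a) a⁻¹) n τ`; for `a = (g τ)⁻¹` this is some `n τ₂` with again `g τ₂ = f(σ)(g τ)`, and
with `f τ₂` an inner twist of `f τ`. Injectivity of `g` gives `τ₁ = τ₂`, which says exactly that
`f(σ)` commutes with `h(τ)`. An automorphism commuting with all `f(τ)` and `h(τ)` commutes with
every `conj (g τ) = h(τ) f(τ)⁻¹`, hence with `Inn(G)` as `g` is onto, and is trivial because `G`
is centerless.
-/

section Holomorph

variable {G : Type*} [Group G]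

@[simp]
theorem MulAut.toPerm_apply (φ : MulAut G) (x : G) : MulAut.toPerm G φ x = φ x := rfl

@[simp]
theorem lambda_apply (a x : G) : lambda G a x = a * x := rfl

@[simp]
theorem rho_apply (c x : G) : rho G c x = x * c⁻¹ := rfl

theorem MulAut.mul_conj (φ : MulAut G) (x : G) :
    φ * MulAut.conj x = MulAut.conj (φ x) * φ := by
  ext y
  simp [MulAut.conj_apply]

theorem MulAut.conj_injective_of_center_eq_bot (hZ : Subgroup.center G = ⊥) :
    Function.Injective (MulAut.conj : G → MulAut G) := by
  rw [← MonoidHom.ker_eq_bot_iff, eq_bot_iff, ← hZ]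
  intro x hx
  rw [Subgroup.mem_center_iff]
  intro y
  have := congrArg (· y) ((MonoidHom.mem_ker).mp hx)
  simp only [MulAut.conj_apply, MulAut.one_apply] at this
  nth_rewrite 1 [← this]
  group

theorem MulAut.eq_one_of_forall_commute_conj (hZ : Subgroup.center G = ⊥) {θ : MulAut G}
    (hθ : ∀ x, Commute θ (MulAut.conj x)) : θ = 1 := by
  ext x
  apply MulAut.conj_injective_of_center_eq_bot hZ
  exact mul_right_cancel ((MulAut.mul_conj θ x).symm.trans (hθ x))

theorem Subgroup.center_range_eq_bot {H M : Type*} [Group H] [Group M] (f : H →* M)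
    (hf : ∀ σ, (∀ τ, Commute (f σ) (f τ)) → f σ = 1) : Subgroup.center f.range = ⊥ := by
  rw [Subgroup.eq_bot_iff_forall]
  rintro ⟨_, σ, rfl⟩ hσ
  refine Subtype.ext (hf σ fun τ => ?_)
  exact congrArg Subtype.val (Subgroup.mem_center_iff.mp hσ ⟨f τ, τ, rfl⟩).symm

theorem rho_mul_toPerm_inj {c d : G} {ψ χ : MulAut G}
    (hEq : rho G c * MulAut.toPerm G ψ = rho G d * MulAut.toPerm G χ) : c = d ∧ ψ = χ := by
  have hc : c = d := by
    simpa using congrArg (· 1) hEq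
  subst hc
  refine ⟨rfl, MulEquiv.ext fun x => ?_⟩
  simpa using congrArg (· x) hEq

theorem lambda_mul_rho_mul_toPerm (b c : G) (ψ : MulAut G) :
    lambda G b * (rho G c * MulAut.toPerm G ψ)
      = rho G (c * b⁻¹) * MulAut.toPerm G (MulAut.conj b * ψ) := by
  ext x
  simp only [Equiv.Perm.mul_apply, lambda_apply, rho_apply, MulAut.toPerm_apply,
    MulAut.mul_apply, MulAut.conj_apply]
  group

theorem rho_mul_toPerm_mul_lambda (c a : G) (ψ : MulAut G) :
    rho G c * MulAut.toPerm G ψ * lambda G a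
      = lambda G (ψ a) * (rho G c * MulAut.toPerm G ψ) := by
  ext x
  simp [mul_assoc]

theorem toPerm_mul_rho_mul_toPerm (φ ψ : MulAut G) (c : G) :
    MulAut.toPerm G φ * (rho G c * MulAut.toPerm G ψ)
      = rho G (φ c) * MulAut.toPerm G (φ * ψ * φ⁻¹) * MulAut.toPerm G φ := by
  ext x
  simp only [Equiv.Perm.mul_apply, rho_apply, MulAut.toPerm_apply, MulAut.mul_apply,
    MulAut.inv_apply_self]
  rw [map_mul, map_inv]

theorem toPerm_mul_lambda (φ : MulAut G) (b : G) :
    MulAut.toPerm G φ * lambda G b = lambda G (φ b) * MulAut.toPerm G φ := by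
  ext x
  simp

theorem lambda_mem_Hol (a : G) : lambda G a ∈ Hol G :=
  (lambda G).range.le_normalizer ⟨a, rfl⟩

theorem toPerm_mem_Hol (φ : MulAut G) : MulAut.toPerm G φ ∈ Hol G := by
  have hconj : ∀ (χ : MulAut G) (b : G),
      MulAut.toPerm G χ * lambda G b * (MulAut.toPerm G χ)⁻¹ = lambda G (χ b) := fun χ b =>
    mul_inv_eq_of_eq_mul (toPerm_mul_lambda χ b)
  refine Subgroup.mem_normalizer_iff.mpr fun p => ⟨?_, ?_⟩
  · rintro ⟨b, rfl⟩
    exact ⟨φ b, (hconj φ b).symm⟩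
  · rintro ⟨b, hb⟩
    refine ⟨φ⁻¹ b, ?_⟩
    rw [← hconj, hb, map_inv]
    group

end Holomorph

section Setup

variable {G : Type*} [Group G] {f h : G →* MulAut G} {g : Equiv.Perm G}
  {N : Subgroup (Equiv.Perm G)}

theorem rho_mul_toPerm_mem
    (hN : (N : Set (Equiv.Perm G))
      = {q | ∃ σ : G, q = rho G (g σ) * MulAut.toPerm G (f σ)}) (σ : G) :
    rho G (g σ) * MulAut.toPerm G (f σ) ∈ N := by
  rw [← SetLike.mem_coe, hN]
  exact ⟨σ, rfl⟩

theorem exists_g_f_of_rho_mul_toPerm_mem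
    (hN : (N : Set (Equiv.Perm G))
      = {q | ∃ σ : G, q = rho G (g σ) * MulAut.toPerm G (f σ)})
    {c : G} {ψ : MulAut G} (hmem : rho G c * MulAut.toPerm G ψ ∈ N) :
    ∃ σ, g σ = c ∧ f σ = ψ := by
  rw [← SetLike.mem_coe, hN] at hmem
  obtain ⟨σ, hσ⟩ := hmem
  exact ⟨σ, rho_mul_toPerm_inj hσ.symm⟩

theorem exists_g_f_of_mulAut_conj
    (hN : (N : Set (Equiv.Perm G))
      = {q | ∃ σ : G, q = rho G (g σ) * MulAut.toPerm G (f σ)})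
    (hNnorm : ∀ x ∈ Hol G, ∀ n ∈ N, x * n * x⁻¹ ∈ N) (φ : MulAut G) (τ : G) :
    ∃ τ', g τ' = φ (g τ) ∧ f τ' = φ * f τ * φ⁻¹ := by
  have hmem := hNnorm _ (toPerm_mem_Hol φ) _ (rho_mul_toPerm_mem hN τ)
  rw [mul_inv_eq_of_eq_mul (toPerm_mul_rho_mul_toPerm φ (f τ) (g τ))] at hmem
  exact exists_g_f_of_rho_mul_toPerm_mem hN hmem

theorem exists_g_f_of_lambda_mul
    (hN : (N : Set (Equiv.Perm G))
      = {q | ∃ σ : G, q = rho G (g σ) * MulAut.toPerm G (f σ)})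
    (hNnorm : ∀ x ∈ Hol G, ∀ n ∈ N, x * n * x⁻¹ ∈ N) (σ a τ : G) :
    ∃ τ', g τ' = g τ * (f σ a * a⁻¹)⁻¹ ∧ f τ' = MulAut.conj (f σ a * a⁻¹) * f τ := by
  set n := rho G (g σ) * MulAut.toPerm G (f σ)
  have hcommutator : n * (lambda G a * n⁻¹ * (lambda G a)⁻¹) = lambda G (f σ a * a⁻¹) := by
    rw [← mul_assoc, ← mul_assoc, rho_mul_toPerm_mul_lambda, mul_inv_cancel_right, map_mul,
      map_inv]
  have hb : lambda G (f σ a * a⁻¹) ∈ N := hcommutator ▸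
    N.mul_mem (rho_mul_toPerm_mem hN σ)
      (hNnorm _ (lambda_mem_Hol a) _ (N.inv_mem (rho_mul_toPerm_mem hN σ)))
  have hmem := N.mul_mem hb (rho_mul_toPerm_mem hN τ)
  rw [lambda_mul_rho_mul_toPerm] at hmem
  exact exists_g_f_of_rho_mul_toPerm_mem hN hmem

theorem commute_f_h
    (hN : (N : Set (Equiv.Perm G))
      = {q | ∃ σ : G, q = rho G (g σ) * MulAut.toPerm G (f σ)})
    (hNnorm : ∀ x ∈ Hol G, ∀ n ∈ N, x * n * x⁻¹ ∈ N)
    (hh : ∀ σ : G, h σ = MulAut.conj (g σ) * f σ) (σ τ : G) :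
    Commute (f σ) (h τ) := by
  obtain ⟨τ₁, hg₁, hf₁⟩ := exists_g_f_of_mulAut_conj hN hNnorm (f σ) τ
  obtain ⟨τ₂, hg₂, hf₂⟩ := exists_g_f_of_lambda_mul hN hNnorm σ (g τ)⁻¹ τ
  have hτ : τ₁ = τ₂ := g.injective (by rw [hg₁, hg₂, map_inv]; group)
  have hconj : f σ * f τ * (f σ)⁻¹ = MulAut.conj ((f σ (g τ))⁻¹ * g τ) * f τ := by
    rw [← hf₁, hτ, hf₂, map_inv, inv_inv]
  rw [Commute, SemiconjBy, hh τ]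
  calc f σ * (MulAut.conj (g τ) * f τ)
      = MulAut.conj (f σ (g τ)) * (f σ * f τ * (f σ)⁻¹) * f σ := by
        rw [← mul_assoc, MulAut.mul_conj]; group
    _ = MulAut.conj (g τ) * f τ * f σ := by
        rw [hconj, ← mul_assoc, ← map_mul, mul_inv_cancel_left]

theorem eq_one_of_commute_f_h (hZ : Subgroup.center G = ⊥)
    (hh : ∀ σ : G, h σ = MulAut.conj (g σ) * f σ) {θ : MulAut G}
    (hθf : ∀ τ, Commute θ (f τ)) (hθh : ∀ τ, Commute θ (h τ)) : θ = 1 := by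
  refine MulAut.eq_one_of_forall_commute_conj hZ fun x => ?_
  obtain ⟨τ, rfl⟩ := g.surjective x
  rw [← mul_inv_cancel_right (MulAut.conj (g τ)) (f τ), ← hh]
  exact (hθh τ).mul_right (hθf τ).inv_right

theorem range_f_normal
    (hN : (N : Set (Equiv.Perm G))
      = {q | ∃ σ : G, q = rho G (g σ) * MulAut.toPerm G (f σ)})
    (hNnorm : ∀ x ∈ Hol G, ∀ n ∈ N, x * n * x⁻¹ ∈ N) : f.range.Normal where
  conj_mem := by
    rintro _ ⟨τ, rfl⟩ φ
    obtain ⟨τ', -, hf⟩ := exists_g_f_of_mulAut_conj hN hNnorm φ τ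
    exact ⟨τ', hf⟩

theorem range_h_normal
    (hN : (N : Set (Equiv.Perm G))
      = {q | ∃ σ : G, q = rho G (g σ) * MulAut.toPerm G (f σ)})
    (hNnorm : ∀ x ∈ Hol G, ∀ n ∈ N, x * n * x⁻¹ ∈ N)
    (hh : ∀ σ : G, h σ = MulAut.conj (g σ) * f σ) : h.range.Normal where
  conj_mem := by
    rintro _ ⟨τ, rfl⟩ φ
    obtain ⟨τ', hg, hf⟩ := exists_g_f_of_mulAut_conj hN hNnorm φ τ
    refine ⟨τ', ?_⟩
    rw [hh, hh, hg, hf, ← mul_assoc, ← mul_assoc, ← MulAut.mul_conj]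
    group

end Setup

theorem ranges_centerless_normal_general
    (G : Type*) [Group G] (hZ : Subgroup.center G = ⊥)
    (f h : G →* MulAut G) (g : Equiv.Perm G)
    (hh : ∀ σ : G, h σ = MulAut.conj (g σ) * f σ)
    (N : Subgroup (Equiv.Perm G))
    (hN : (N : Set (Equiv.Perm G))
      = {q | ∃ σ : G, q = rho G (g σ) * MulAut.toPerm G (f σ)})
    (hNnorm : ∀ x ∈ Hol G, ∀ n ∈ N, x * n * x⁻¹ ∈ N)
    :
    f.range.Normal ∧ h.range.Normal ∧
      Subgroup.center ↥f.range = ⊥ ∧ Subgroup.center ↥h.range = ⊥ :=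
  ⟨range_f_normal hN hNnorm, range_h_normal hN hNnorm hh,
    Subgroup.center_range_eq_bot f fun σ hσ =>
      eq_one_of_commute_f_h hZ hh hσ (commute_f_h hN hNnorm hh σ),
    Subgroup.center_range_eq_bot h fun σ hσ =>
      eq_one_of_commute_f_h hZ hh (fun τ => (commute_f_h hN hNnorm hh τ σ).symm) hσ⟩

/-- In the setup, the images `f(G)` and `h(G)` are centerless normal
subgroups of `Aut(G)`. -/
theorem ranges_centerless_normal
    (G : Type*) [Group G] (hZ : Subgroup.center G = ⊥)
    (f h : G →* MulAut G) (g : Equiv.Perm G) (hg1 : g 1 = 1)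
    (hrel : ∀ σ τ : G, g (σ * τ) = g σ * (f σ) (g τ))
    (hh : ∀ σ : G, h σ = MulAut.conj (g σ) * f σ)
    (N : Subgroup (Equiv.Perm G))
    (hN : (N : Set (Equiv.Perm G))
      = {q | ∃ σ : G, q = rho G (g σ) * MulAut.toPerm G (f σ)})
    (hNle : N ≤ Hol G)
    (hNnorm : ∀ x ∈ Hol G, ∀ n ∈ N, x * n * x⁻¹ ∈ N)
    :
    f.range.Normal ∧ h.range.Normal ∧
      Subgroup.center ↥f.range = ⊥ ∧ Subgroup.center ↥h.range = ⊥ :=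
  ranges_centerless_normal_general G hZ f h g hh N hN hNnorm
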